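/- arXiv:2605.10502 — 2 statements merged into one kernel-verified Lean document; each statement's English description precedes it below -/
import Mathlib

section
/- In the braid group B_n, the BKL generators a_{i,j} = (σ_i ⋯ σ_{j−2}) σ_{j−1} (σ_i ⋯ σ_{j−2})^{-1} satisfy the relation a_{i,j} a_{j,k} = a_{i,k} a_{i,j} for all 1 ≤ i < j < k ≤ n. -/
/-- Artin relations for the braid group on `n` strands (generators `σ_1,…,σ_{n-1}`,
indexed by natural numbers; superfluous generators `σ_0` and `σ_i` for `i > n-1`
are killed by extra relations). -/
def braidRels (n : ℕ) : Set (FreeGroup ℕ) :=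
  { r | (∃ i j : ℕ, 1 ≤ i ∧ i + 2 ≤ j ∧ j ≤ n - 1 ∧
        r = FreeGroup.of i * FreeGroup.of j * (FreeGroup.of i)⁻¹ * (FreeGroup.of j)⁻¹) ∨
      (∃ i : ℕ, 1 ≤ i ∧ i + 1 ≤ n - 1 ∧
        r = FreeGroup.of i * FreeGroup.of (i + 1) * FreeGroup.of i *
          (FreeGroup.of (i + 1))⁻¹ * (FreeGroup.of i)⁻¹ * (FreeGroup.of (i + 1))⁻¹) ∨
      (∃ i : ℕ, (i = 0 ∨ n - 1 < i) ∧ r = FreeGroup.of i) }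

/-- The braid group `B_n` on `n` strands, with the Artin presentation. -/
def BraidGroup (n : ℕ) : Type := PresentedGroup (braidRels n)

instance (n : ℕ) : Group (BraidGroup n) :=
  inferInstanceAs (Group (PresentedGroup (braidRels n)))

/-- The Artin generator `σ_i` of `B_n` (meaningful for `1 ≤ i ≤ n-1`). -/
def σ (n i : ℕ) : BraidGroup n := PresentedGroup.of i

/-- The product `σ_i σ_{i+1} ⋯ σ_{j-2}` in `B_n`. -/
def bklPre (n i j : ℕ) : BraidGroup n := ((List.range' i (j - 1 - i)).map (σ n)).prod

/-- The BKL (band) generator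
`a_{i,j} = (σ_i ⋯ σ_{j-2}) σ_{j-1} (σ_i ⋯ σ_{j-2})⁻¹` of `B_n`, for `1 ≤ i < j ≤ n`. -/
def bkl (n i j : ℕ) : BraidGroup n := bklPre n i j * σ n (j - 1) * (bklPre n i j)⁻¹

/-- The dual Garside element `δ = σ_1 σ_2 ⋯ σ_{n-1}` of `B_n`. -/
def δb (n : ℕ) : BraidGroup n := ((List.range' 1 (n - 1)).map (σ n)).prod

lemma rel_eq_one {n : ℕ} {r : FreeGroup ℕ} (h : r ∈ braidRels n) :
    (PresentedGroup.mk (braidRels n) r : BraidGroup n) = 1 :=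
  (QuotientGroup.eq_one_iff r).mpr (Subgroup.subset_normalClosure h)

lemma sigma_triv {n i : ℕ} (h : i = 0 ∨ n - 1 < i) : σ n i = 1 :=
  rel_eq_one (Or.inr (Or.inr ⟨i, h, rfl⟩))

lemma sigma_comm {n a b : ℕ} (h : a + 2 ≤ b) : Commute (σ n a) (σ n b) := by
  rcases Nat.eq_zero_or_pos a with ha | ha
  · rw [ha, sigma_triv (Or.inl rfl)]; exact Commute.one_left _
  rcases le_or_gt b (n - 1) with hb | hb
  · have h1 := rel_eq_one (n := n) (Or.inl ⟨a, b, ha, h, hb, rfl⟩)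
    simp only [map_mul, map_inv] at h1
    exact commutatorElement_eq_one_iff_commute.mp h1
  · rw [sigma_triv (Or.inr hb)]; exact Commute.one_right _

lemma sigma_braid {n a : ℕ} (ha : 1 ≤ a) (hb : a + 1 ≤ n - 1) :
    σ n a * σ n (a + 1) * σ n a = σ n (a + 1) * σ n a * σ n (a + 1) := by
  have h1 := rel_eq_one (n := n) (Or.inr (Or.inl ⟨a, ha, hb, rfl⟩))
  simp only [map_mul, map_inv] at h1
  have h2 : σ n a * σ n (a + 1) * σ n a * (σ n (a + 1))⁻¹ * (σ n a)⁻¹ * (σ n (a + 1))⁻¹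
      = 1 := h1
  have h3 : (σ n a * σ n (a + 1) * σ n a) * (σ n (a + 1) * σ n a * σ n (a + 1))⁻¹ = 1 := by
    simp only [mul_inv_rev, ← mul_assoc]
    exact h2
  exact mul_inv_eq_one.mp h3

lemma sigma_comm_bklPre {n i j m : ℕ} (h : j ≤ m) : Commute (σ n m) (bklPre n i j) := by
  apply Commute.list_prod_right
  intro x hx
  simp only [List.mem_map, List.mem_range'] at hx
  obtain ⟨y, ⟨hy1, hy2⟩, rfl⟩ := hx
  exact (sigma_comm (by omega)).symm

lemma sigma_comm_bkl {n i j m : ℕ} (hj : 1 ≤ j) (h : j + 1 ≤ m) :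
    Commute (σ n m) (bkl n i j) := by
  unfold bkl
  exact ((sigma_comm_bklPre (by omega)).mul_right (sigma_comm (by omega)).symm).mul_right
    (sigma_comm_bklPre (by omega)).inv_right

lemma bklPre_succ {n i k : ℕ} (h : i + 2 ≤ k) :
    bklPre n i k = bklPre n i (k - 1) * σ n (k - 2) := by
  unfold bklPre
  have h1 : k - 1 - i = (k - 1 - 1 - i) + 1 := by omega
  rw [h1, List.range'_1_concat]
  have h2 : i + (k - 1 - 1 - i) = k - 2 := by omega
  rw [h2, List.map_append, List.prod_append]
  simp

lemma bkl_base {n i : ℕ} : bkl n i (i + 1) = σ n i := by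
  unfold bkl bklPre
  simp

lemma bkl_rec {n i k : ℕ} (h1 : 1 ≤ i) (h2 : i + 2 ≤ k) (h3 : k ≤ n) :
    bkl n i k = (σ n (k - 1))⁻¹ * bkl n i (k - 1) * σ n (k - 1) := by
  obtain ⟨a, rfl⟩ : ∃ a, k = a + 2 := ⟨k - 2, by omega⟩
  have e1 : a + 2 - 1 = a + 1 := rfl
  have e2 : a + 2 - 2 = a := rfl
  have e3 : a + 1 - 1 = a := rfl
  have hbr : σ n a * σ n (a + 1) * σ n a = σ n (a + 1) * σ n a * σ n (a + 1) :=
    sigma_braid (by omega) (by omega)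
  have hc : Commute (σ n (a + 1)) (bklPre n i (a + 1)) := sigma_comm_bklPre (le_refl _)
  rw [bkl, bklPre_succ h2, e1, e2, bkl, e3]
  set P := bklPre n i (a + 1)
  have key : σ n a * σ n (a + 1) * (σ n a)⁻¹ = (σ n (a + 1))⁻¹ * σ n a * σ n (a + 1) := by
    calc σ n a * σ n (a + 1) * (σ n a)⁻¹
        = (σ n (a + 1))⁻¹ * (σ n (a + 1) * σ n a * σ n (a + 1)) * (σ n a)⁻¹ := by group
      _ = (σ n (a + 1))⁻¹ * (σ n a * σ n (a + 1) * σ n a) * (σ n a)⁻¹ := by rw [hbr]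
      _ = (σ n (a + 1))⁻¹ * σ n a * σ n (a + 1) := by group
  calc P * σ n a * σ n (a + 1) * (P * σ n a)⁻¹
      = P * (σ n a * σ n (a + 1) * (σ n a)⁻¹) * P⁻¹ := by group
    _ = P * ((σ n (a + 1))⁻¹ * σ n a * σ n (a + 1)) * P⁻¹ := by rw [key]
    _ = (P * (σ n (a + 1))⁻¹) * σ n a * (σ n (a + 1) * P⁻¹) := by group
    _ = ((σ n (a + 1))⁻¹ * P) * σ n a * (P⁻¹ * σ n (a + 1)) := by
        rw [← hc.inv_left.eq, hc.inv_right.eq]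
    _ = (σ n (a + 1))⁻¹ * (P * σ n a * P⁻¹) * σ n (a + 1) := by group

lemma bkl_braid {n i j : ℕ} (h1 : 1 ≤ i) (h2 : i < j) (h3 : j + 1 ≤ n) :
    σ n j * bkl n i j * σ n j = bkl n i j * σ n j * bkl n i j := by
  obtain ⟨a, rfl⟩ : ∃ a, j = a + 1 := ⟨j - 1, by omega⟩
  have e3 : a + 1 - 1 = a := rfl
  have hbr : σ n a * σ n (a + 1) * σ n a = σ n (a + 1) * σ n a * σ n (a + 1) :=
    sigma_braid (by omega) (by omega)
  have hc : Commute (σ n (a + 1)) (bklPre n i (a + 1)) := sigma_comm_bklPre (le_refl _)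
  rw [bkl, e3]
  set P := bklPre n i (a + 1)
  have hfix : P * σ n (a + 1) * P⁻¹ = σ n (a + 1) := by
    rw [← hc.eq, mul_inv_cancel_right]
  calc σ n (a + 1) * (P * σ n a * P⁻¹) * σ n (a + 1)
      = (σ n (a + 1) * P) * σ n a * (P⁻¹ * σ n (a + 1)) := by group
    _ = (P * σ n (a + 1)) * σ n a * (σ n (a + 1) * P⁻¹) := by
        rw [hc.eq, hc.inv_right.eq]
    _ = P * (σ n (a + 1) * σ n a * σ n (a + 1)) * P⁻¹ := by group
    _ = P * (σ n a * σ n (a + 1) * σ n a) * P⁻¹ := by rw [hbr]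
    _ = (P * σ n a * P⁻¹) * (P * σ n (a + 1) * P⁻¹) * (P * σ n a * P⁻¹) := by group
    _ = (P * σ n a * P⁻¹) * σ n (a + 1) * (P * σ n a * P⁻¹) := by rw [hfix]

/-- the band relation `a_{i,j} a_{j,k} = a_{i,k} a_{i,j}` for `1 ≤ i < j < k ≤ n`. -/
theorem bkl_band_relation (n i j k : ℕ) (h1 : 1 ≤ i) (hij : i < j) (hjk : j < k)
    (hkn : k ≤ n) :
    bkl n i j * bkl n j k = bkl n i k * bkl n i j := by
  revert hkn
  induction k, hjk using Nat.le_induction with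
  | base =>
    intro hkn
    have e : j + 1 - 1 = j := rfl
    rw [bkl_base, bkl_rec h1 (by omega) hkn, e]
    have hb := bkl_braid h1 hij hkn
    calc bkl n i j * σ n j
        = (σ n j)⁻¹ * (σ n j * bkl n i j * σ n j) := by group
      _ = (σ n j)⁻¹ * (bkl n i j * σ n j * bkl n i j) := by rw [hb]
      _ = (σ n j)⁻¹ * bkl n i j * σ n j * bkl n i j := by group
  | succ k hk ih =>
    intro hkn
    have e : k + 1 - 1 = k := rfl
    have hjk1 : bkl n j (k + 1) = (σ n k)⁻¹ * bkl n j k * σ n k := by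
      rw [bkl_rec (by omega) (by omega) hkn, e]
    have hik1 : bkl n i (k + 1) = (σ n k)⁻¹ * bkl n i k * σ n k := by
      rw [bkl_rec h1 (by omega) hkn, e]
    have hc : Commute (σ n k) (bkl n i j) := sigma_comm_bkl (by omega) (by omega)
    have ih' := ih (by omega)
    rw [hjk1, hik1]
    calc bkl n i j * ((σ n k)⁻¹ * bkl n j k * σ n k)
        = (bkl n i j * (σ n k)⁻¹) * bkl n j k * σ n k := by group
      _ = ((σ n k)⁻¹ * bkl n i j) * bkl n j k * σ n k := by rw [hc.inv_left.eq]
      _ = (σ n k)⁻¹ * (bkl n i j * bkl n j k) * σ n k := by group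
      _ = (σ n k)⁻¹ * (bkl n i k * bkl n i j) * σ n k := by rw [ih']
      _ = (σ n k)⁻¹ * bkl n i k * (bkl n i j * σ n k) := by group
      _ = (σ n k)⁻¹ * bkl n i k * (σ n k * bkl n i j) := by rw [hc.eq]
      _ = (σ n k)⁻¹ * bkl n i k * σ n k * bkl n i j := by group
end

section
/- In the braid group B_n, the BKL generators satisfy a_{i,k} a_{i,j} = a_{j,k} a_{i,k} for all 1 ≤ i < j < k ≤ n. -/
/-!
Write `a_{i,k}` as the conjugate of `σ_{k-1}` by `σ_i ⋯ σ_{k-2}`. Since `σ_k` commutes with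
`σ_i ⋯ σ_{k-2}`, the braid relation gives `σ_k a_{i,k+1} σ_k⁻¹ = a_{i,k}` for `i < k`, while `σ_k`
commutes with `a_{i,j}` for `j < k`; so conjugating by `σ_k` reduces the relation for `k + 1` to
the one for `k`. For `k = j + 1` it is the braid relation `σ_{j-1} σ_j σ_{j-1} = σ_j σ_{j-1} σ_j`
conjugated by `σ_i ⋯ σ_{j-2}`, which fixes `σ_j = a_{j,j+1}`.
-/

namespace MulAut

variable {G : Type*} [Group G]

theorem conj_eq_self_of_commute {g x : G} (h : Commute g x) : conj g x = x := by
  rw [conj_apply, h.eq, mul_inv_cancel_right]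

theorem conj_conj_comm_of_commute {g h : G} (hgh : Commute g h) (x : G) :
    conj g (conj h x) = conj h (conj g x) := by
  rw [← mul_apply, ← mul_apply, ← map_mul, ← map_mul, hgh.eq]

variable {s t : G}

theorem conj_conj_eq_of_braid (h : s * t * s = t * s * t) :
    conj t (conj s t) = s := by
  simp only [conj_apply, ← mul_assoc, ← h]
  group

theorem conj_mul_eq_mul_conj_of_braid (h : s * t * s = t * s * t) :
    conj s t * s = t * conj s t := by
  simp only [conj_apply, ← mul_assoc, ← h]
  group

end MulAut

namespace BraidGroup

theorem mk_eq_one_of_mem_braidRels {n : ℕ} {r : FreeGroup ℕ} (h : r ∈ braidRels n) :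
    PresentedGroup.mk (braidRels n) r = 1 :=
  (QuotientGroup.eq_one_iff r).mpr (Subgroup.subset_normalClosure h)

theorem σ_eq_one {n i : ℕ} (h : i = 0 ∨ n - 1 < i) : σ n i = 1 :=
  mk_eq_one_of_mem_braidRels (Or.inr (Or.inr ⟨i, h, rfl⟩))

theorem commute_σ_σ (n : ℕ) {i m : ℕ} (h : i + 2 ≤ m) : Commute (σ n i) (σ n m) := by
  rcases Nat.eq_zero_or_pos i with rfl | hi
  · rw [σ_eq_one (Or.inl rfl)]; exact Commute.one_left _
  rcases le_or_gt m (n - 1) with hm | hm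
  · have hr : σ n i * σ n m * (σ n i)⁻¹ * (σ n m)⁻¹ = 1 :=
      mk_eq_one_of_mem_braidRels (Or.inl ⟨i, m, hi, h, hm, rfl⟩)
    exact mul_inv_eq_one.mp (by simpa only [mul_inv_rev, inv_inv, ← mul_assoc] using hr)
  · rw [σ_eq_one (Or.inr hm)]; exact Commute.one_right _

theorem σ_braid (n : ℕ) {i : ℕ} (h1 : 1 ≤ i) (h2 : i + 2 ≤ n) :
    σ n i * σ n (i + 1) * σ n i = σ n (i + 1) * σ n i * σ n (i + 1) := by
  have hr : σ n i * σ n (i + 1) * σ n i * (σ n (i + 1))⁻¹ * (σ n i)⁻¹ * (σ n (i + 1))⁻¹ = 1 :=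
    mk_eq_one_of_mem_braidRels (Or.inr (Or.inl ⟨i, h1, by omega, rfl⟩))
  exact mul_inv_eq_one.mp (by simpa only [mul_inv_rev, inv_inv, ← mul_assoc] using hr)

theorem commute_σ_bklPre (n : ℕ) {m i j : ℕ} (h : j ≤ m) : Commute (σ n m) (bklPre n i j) := by
  refine Commute.list_prod_right _ _ fun x hx => ?_
  obtain ⟨a, ha, rfl⟩ := List.mem_map.1 hx
  rw [List.mem_range'_1] at ha
  exact (commute_σ_σ n (by omega)).symm

theorem bkl_eq_conj (n i j : ℕ) : bkl n i j = MulAut.conj (bklPre n i j) (σ n (j - 1)) := rfl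

theorem commute_σ_bkl (n : ℕ) {m i j : ℕ} (hj : 1 ≤ j) (h : j < m) :
    Commute (σ n m) (bkl n i j) :=
  ((commute_σ_bklPre n h.le).mul_right (commute_σ_σ n (by omega)).symm).mul_right
    (commute_σ_bklPre n h.le).inv_right

theorem bklPre_succ (n : ℕ) {i j : ℕ} (h : i < j) :
    bklPre n i (j + 1) = bklPre n i j * σ n (j - 1) := by
  rw [bklPre, bklPre, show j + 1 - 1 - i = j - 1 - i + 1 by omega, List.range'_concat,
    List.map_append, List.prod_append, show i + 1 * (j - 1 - i) = j - 1 by omega]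
  simp

theorem bkl_succ (n : ℕ) {i k : ℕ} (h : i < k) :
    bkl n i (k + 1) = MulAut.conj (bklPre n i k) (MulAut.conj (σ n (k - 1)) (σ n k)) := by
  rw [bkl_eq_conj, bklPre_succ n h, map_mul, Nat.add_sub_cancel, MulAut.mul_apply]

theorem bkl_self_succ (n k : ℕ) : bkl n k (k + 1) = σ n k := by
  simp [bkl, bklPre]

theorem conj_σ_bkl_succ (n : ℕ) {i k : ℕ} (h1 : 1 ≤ i) (hik : i < k) (hkn : k < n) :
    MulAut.conj (σ n k) (bkl n i (k + 1)) = bkl n i k := by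
  have hbraid := σ_braid n (i := k - 1) (by omega) (by omega)
  rw [Nat.sub_add_cancel (by omega)] at hbraid
  rw [bkl_succ n hik, MulAut.conj_conj_comm_of_commute (commute_σ_bklPre n le_rfl),
    MulAut.conj_conj_eq_of_braid hbraid, bkl_eq_conj]

theorem bkl_band_relation_succ (n : ℕ) {i j : ℕ} (h1 : 1 ≤ i) (hij : i < j) (hjn : j < n) :
    bkl n i (j + 1) * bkl n i j = bkl n j (j + 1) * bkl n i (j + 1) := by
  have hbraid := σ_braid n (i := j - 1) (by omega) (by omega)
  rw [Nat.sub_add_cancel (by omega)] at hbraid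
  rw [bkl_succ n hij, bkl_eq_conj n i j, bkl_self_succ, ← map_mul,
    MulAut.conj_mul_eq_mul_conj_of_braid hbraid, map_mul,
    MulAut.conj_eq_self_of_commute (commute_σ_bklPre n le_rfl).symm]

end BraidGroup

open BraidGroup in
/-- the band relation `a_{i,k} a_{i,j} = a_{j,k} a_{i,k}` for `1 ≤ i < j < k ≤ n`. -/
theorem bkl_band_relation' (n i j k : ℕ) (h1 : 1 ≤ i) (hij : i < j) (hjk : j < k)
    (hkn : k ≤ n) :
    bkl n i k * bkl n i j = bkl n j k * bkl n i k := by
  induction k, hjk using Nat.le_induction with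
  | base => exact bkl_band_relation_succ n h1 hij hkn
  | succ k hjk ih =>
    apply (MulAut.conj (σ n k)).injective
    rw [map_mul, map_mul, conj_σ_bkl_succ n h1 (by omega) hkn,
      conj_σ_bkl_succ n (by omega) hjk hkn,
      MulAut.conj_eq_self_of_commute (commute_σ_bkl n (by omega) hjk), ih (by omega)]
end
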